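/- Let G be a graph and v a vertex with degree strictly greater than k. Then G has a vertex cover of size at most k if and only if G − v (deleting v and its incident edges) has a vertex cover of size at most k − 1. -/

import Mathlib

/-! A cover avoiding `v` must contain all of its more than `k` neighbours, so every cover of size
at most `k` contains `v`; deleting `v` from such a cover, or adding `v` to a cover of `G - v`,
changes its size by one. -/

def IsVC {V : Type*} (G : SimpleGraph V) (S : Set V) : Prop :=
  ∀ ⦃u w : V⦄, G.Adj u w → u ∈ S ∨ w ∈ S

namespace IsVC

variable {V : Type*} {G : SimpleGraph V} {S : Set V}

theorem degree_le_ncard {v : V} [Fintype (G.neighborSet v)] (hS : IsVC G S) (hfin : S.Finite)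
    (hv : v ∉ S) : G.degree v ≤ S.ncard := by
  have hsub : G.neighborSet v ⊆ S := fun _ hw => (hS hw).resolve_left hv
  rw [← G.card_neighborSet_eq_degree, ← Set.toFinset_card, ← Set.ncard_eq_toFinset_card']
  exact Set.ncard_le_ncard hsub hfin

theorem mem_of_ncard_lt_degree [Finite V] {v : V} [Fintype (G.neighborSet v)] (hS : IsVC G S)
    (hlt : S.ncard < G.degree v) : v ∈ S := by
  by_contra hv
  exact (hS.degree_le_ncard S.toFinite hv).not_gt hlt

theorem induce (hS : IsVC G S) (s : Set V) : IsVC (G.induce s) {x : s | ↑x ∈ S} :=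
  fun _ _ h => hS h

theorem insert_of_induce_ne {v : V} {T : Set {u : V // u ≠ v}}
    (hT : IsVC (G.induce {u : V | u ≠ v}) T) : IsVC G (insert v (Subtype.val '' T)) := by
  intro u w h
  by_cases hu : u = v
  · exact .inl (.inl hu)
  by_cases hw : w = v
  · exact .inr (.inl hw)
  exact (hT (u := ⟨u, hu⟩) (w := ⟨w, hw⟩) h).imp (fun h' => .inr ⟨_, h', rfl⟩)
    (fun h' => .inr ⟨_, h', rfl⟩)

end IsVC

theorem stmt_7_general {V : Type*} [Fintype V] (G : SimpleGraph V)
    [DecidableRel G.Adj] (k : ℕ) (hk : 0 < k) (v : V) (hdeg : k < G.degree v) :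
    (∃ S : Set V, IsVC G S ∧ S.ncard ≤ k) ↔
      (∃ S : Set {u : V // u ≠ v}, IsVC (G.induce {u : V | u ≠ v}) S ∧ S.ncard ≤ k - 1) := by
  constructor
  · rintro ⟨S, hS, hcard⟩
    have hv : v ∈ S := hS.mem_of_ncard_lt_degree (by omega)
    refine ⟨_, hS.induce _, ?_⟩
    rw [Set.ncard_subtype]
    change (S \ {v}).ncard ≤ k - 1
    rw [Set.ncard_sdiff_singleton_of_mem hv]
    omega
  · rintro ⟨T, hT, hcard⟩
    refine ⟨_, hT.insert_of_induce_ne, ?_⟩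
    calc (insert v (Subtype.val '' T)).ncard
        ≤ (Subtype.val '' T).ncard + 1 := Set.ncard_insert_le _ _
      _ = T.ncard + 1 := by rw [Set.ncard_image_of_injective _ Subtype.val_injective]
      _ ≤ k := by omega

theorem stmt_7 {V : Type*} [Fintype V] [DecidableEq V] (G : SimpleGraph V)
    [DecidableRel G.Adj] (k : ℕ) (hk : 0 < k) (v : V) (hdeg : k < G.degree v) :
    (∃ S : Set V, IsVC G S ∧ S.ncard ≤ k) ↔
      (∃ S : Set {u : V // u ≠ v}, IsVC (G.induce {u : V | u ≠ v}) S ∧ S.ncard ≤ k - 1) :=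
  stmt_7_general G k hk v hdeg
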